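/- arXiv:2511.07341 — 2 statements merged into one kernel-verified Lean document; each statement's English description precedes it below -/
import Mathlib

section
/- Let E be a finite-dimensional real inner product space, Q ⊆ E a nonempty compact convex set, V : Q → E a monotone operator (⟨V(y) − V(x), y − x⟩ ≥ 0 for all x, y ∈ Q), and ψ : Q → ℝ a convex function. Let K ≥ 1, x_1, …, x_K ∈ Q, and for each i let s_i ∈ E be a subgradient of ψ at x_i, i.e. ψ(x) ≥ ψ(x_i) + ⟨s_i, x − x_i⟩ for all x ∈ Q; set g_i = V(x_i) + s_i. Let a_1, …, a_K > 0, A = Σ_{i=1}^K a_i, and x̄ = (1/A)·Σ_{i=1}^K a_i x_i. Then (1/A)·max_{x ∈ Q} Σ_{i=1}^K a_i ⟨g_i, x_i − x⟩ ≥ ψ(x̄) + max_{x ∈ Q} [ ⟨V(x), x̄ − x⟩ − ψ(x) ]. -/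
open scoped RealInnerProductSpace

/-- The accuracy certificate bounds the merit function: for a monotone
operator `V` and convex `ψ` on a nonempty compact convex set `Q`, subgradients
`s_i ∈ ∂ψ(x_i)`, `g_i = V(x_i) + s_i`, positive weights `a_i` with sum `A`, and the
average point `x̄ = (1/A) Σ a_i x_i`, one has
`(1/A)·max_{x∈Q} Σ a_i⟨g_i, x_i − x⟩ ≥ ψ(x̄) + max_{x∈Q} [⟨V(x), x̄ − x⟩ − ψ(x)]`. -/
theorem accuracy_certificate_ge_merit
    {E : Type*} [NormedAddCommGroup E] [InnerProductSpace ℝ E] [FiniteDimensional ℝ E]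
    (Q : Set E) (hne : Q.Nonempty) (hcomp : IsCompact Q) (hconv : Convex ℝ Q)
    (V : E → E) (hmono : ∀ x ∈ Q, ∀ y ∈ Q, 0 ≤ ⟪V y - V x, y - x⟫)
    (ψ : E → ℝ) (hψ : ConvexOn ℝ Q ψ)
    (K : ℕ) (hK : 1 ≤ K)
    (x : ℕ → E) (hx : ∀ k, 1 ≤ k → k ≤ K → x k ∈ Q)
    (s : ℕ → E) (hs : ∀ k, 1 ≤ k → k ≤ K → ∀ z ∈ Q, ψ (x k) + ⟪s k, z - x k⟫ ≤ ψ z)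
    (g : ℕ → E) (hg : ∀ k, 1 ≤ k → k ≤ K → g k = V (x k) + s k)
    (a : ℕ → ℝ) (ha : ∀ k, 1 ≤ k → k ≤ K → 0 < a k)
    (A : ℝ) (hA : A = ∑ k ∈ Finset.Icc 1 K, a k)
    (xbar : E) (hxbar : xbar = A⁻¹ • ∑ k ∈ Finset.Icc 1 K, a k • x k) :
    ψ xbar + sSup {w : ℝ | ∃ z ∈ Q, w = ⟪V z, xbar - z⟫ - ψ z}
      ≤ (1 / A) * sSup {w : ℝ | ∃ z ∈ Q, w = ∑ k ∈ Finset.Icc 1 K, a k * ⟪g k, x k - z⟫} := by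
  have hIcc : (Finset.Icc 1 K).Nonempty := Finset.nonempty_Icc.mpr hK
  have hApos : 0 < A := hA ▸ Finset.sum_pos
    (fun k hk => ha k (Finset.mem_Icc.mp hk).1 (Finset.mem_Icc.mp hk).2) hIcc
  have hAne : A ≠ 0 := ne_of_gt hApos
  set T := {w : ℝ | ∃ z ∈ Q, w = ∑ k ∈ Finset.Icc 1 K, a k * ⟪g k, x k - z⟫} with hT
  have hTbdd : BddAbove T := by
    have hTim : T = (fun z => ∑ k ∈ Finset.Icc 1 K, a k * ⟪g k, x k - z⟫) '' Q := by
      ext w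
      simp only [hT, Set.mem_setOf_eq, Set.mem_image]
      exact ⟨fun ⟨z, hz, h⟩ => ⟨z, hz, h.symm⟩, fun ⟨z, hz, h⟩ => ⟨z, hz, h.symm⟩⟩
    rw [hTim]
    have hcont : Continuous fun z : E => ∑ k ∈ Finset.Icc 1 K, a k * ⟪g k, x k - z⟫ :=
      continuous_finset_sum _ fun k _ => continuous_const.mul
        (continuous_const.inner (continuous_const.sub continuous_id))
    exact (hcomp.image hcont).bddAbove
  have hsum_smul : ∑ k ∈ Finset.Icc 1 K, a k • x k = A • xbar := by
    rw [hxbar, smul_inv_smul₀ hAne]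
  have hxbar' : xbar = ∑ k ∈ Finset.Icc 1 K, (A⁻¹ * a k) • x k := by
    rw [hxbar, Finset.smul_sum]
    simp [smul_smul]
  have hwsum : ∑ k ∈ Finset.Icc 1 K, (A⁻¹ * a k) = 1 := by
    rw [← Finset.mul_sum, ← hA, inv_mul_cancel₀ hAne]
  have hjensen : ψ xbar ≤ ∑ k ∈ Finset.Icc 1 K, (A⁻¹ * a k) * ψ (x k) := by
    rw [hxbar']
    exact hψ.map_sum_le
      (fun k hk => mul_nonneg (inv_nonneg.mpr hApos.le)
        (ha k (Finset.mem_Icc.mp hk).1 (Finset.mem_Icc.mp hk).2).le)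
      hwsum (fun k hk => hx k (Finset.mem_Icc.mp hk).1 (Finset.mem_Icc.mp hk).2)
  have hjensen' : A * ψ xbar ≤ ∑ k ∈ Finset.Icc 1 K, a k * ψ (x k) := by
    calc A * ψ xbar ≤ A * ∑ k ∈ Finset.Icc 1 K, (A⁻¹ * a k) * ψ (x k) := by
          exact mul_le_mul_of_nonneg_left hjensen hApos.le
      _ = ∑ k ∈ Finset.Icc 1 K, a k * ψ (x k) := by
          rw [Finset.mul_sum]
          refine Finset.sum_congr rfl fun k hk => ?_
          field_simp
  have key : ∀ z ∈ Q, A * (ψ xbar + (⟪V z, xbar - z⟫ - ψ z))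
      ≤ ∑ k ∈ Finset.Icc 1 K, a k * ⟪g k, x k - z⟫ := by
    intro z hz
    have hterm : ∀ k ∈ Finset.Icc 1 K,
        a k * (⟪V z, x k - z⟫ + (ψ (x k) - ψ z)) ≤ a k * ⟪g k, x k - z⟫ := by
      intro k hk
      obtain ⟨hk1, hk2⟩ := Finset.mem_Icc.mp hk
      refine mul_le_mul_of_nonneg_left ?_ (ha k hk1 hk2).le
      rw [hg k hk1 hk2, inner_add_left]
      have hm : ⟪V z, x k - z⟫ ≤ ⟪V (x k), x k - z⟫ := by
        have := hmono z hz (x k) (hx k hk1 hk2)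
        rw [inner_sub_left] at this
        linarith
      have hsg : ψ (x k) - ψ z ≤ ⟪s k, x k - z⟫ := by
        have := hs k hk1 hk2 z hz
        have h2 : ⟪s k, x k - z⟫ = -⟪s k, z - x k⟫ := by
          rw [← inner_neg_right, neg_sub]
        linarith
      linarith
    calc A * (ψ xbar + (⟪V z, xbar - z⟫ - ψ z))
        ≤ ∑ k ∈ Finset.Icc 1 K, a k * ψ (x k) + (A * ⟪V z, xbar - z⟫ - A * ψ z) := by
          nlinarith [hjensen']
      _ = ∑ k ∈ Finset.Icc 1 K, a k * (⟪V z, x k - z⟫ + (ψ (x k) - ψ z)) := by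
          rw [Finset.sum_congr rfl (fun k hk => mul_add (a k) _ _), Finset.sum_add_distrib]
          have h1 : ∑ k ∈ Finset.Icc 1 K, a k * ⟪V z, x k - z⟫ = A * ⟪V z, xbar - z⟫ := by
            have : ∀ k, a k * ⟪V z, x k - z⟫ = ⟪V z, a k • x k⟫ - a k * ⟪V z, z⟫ := by
              intro k
              rw [inner_sub_right, inner_smul_right]
              ring
            simp_rw [this, Finset.sum_sub_distrib, ← inner_sum, hsum_smul, ← Finset.sum_mul,
              ← hA, inner_smul_right, inner_sub_right]
            ring
          have h2 : ∑ k ∈ Finset.Icc 1 K, a k * (ψ (x k) - ψ z)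
              = ∑ k ∈ Finset.Icc 1 K, a k * ψ (x k) - A * ψ z := by
            simp_rw [mul_sub, Finset.sum_sub_distrib, ← Finset.sum_mul, ← hA]
          rw [h1, h2]
          ring
      _ ≤ ∑ k ∈ Finset.Icc 1 K, a k * ⟪g k, x k - z⟫ := Finset.sum_le_sum hterm
  rw [← sub_nonneg]
  have hS : ∀ w ∈ {w : ℝ | ∃ z ∈ Q, w = ⟪V z, xbar - z⟫ - ψ z},
      w ≤ (1 / A) * sSup T - ψ xbar := by
    rintro w ⟨z, hz, rfl⟩
    have h1 : ∑ k ∈ Finset.Icc 1 K, a k * ⟪g k, x k - z⟫ ≤ sSup T :=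
      le_csSup hTbdd ⟨z, hz, rfl⟩
    have h2 := (key z hz).trans h1
    have h3 : (ψ xbar + (⟪V z, xbar - z⟫ - ψ z)) * A ≤ sSup T := by nlinarith
    have h4 := (le_div_iff₀ hApos).mpr h3
    rw [one_div]
    rw [div_eq_inv_mul] at h4
    linarith
  obtain ⟨z₀, hz₀⟩ := hne
  have hsle : sSup {w : ℝ | ∃ z ∈ Q, w = ⟪V z, xbar - z⟫ - ψ z} ≤ (1 / A) * sSup T - ψ xbar :=
    csSup_le ⟨_, ⟨z₀, hz₀, rfl⟩⟩ hS
  linarith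
end

section
/- Let E be a finite-dimensional real inner product space, Q ⊆ E an open convex set, p ≥ 2 an integer, and V : Q → E a p-times continuously differentiable monotone operator (⟨V(y) − V(z), y − z⟩ ≥ 0 for all y, z ∈ Q). Fix x ∈ Q and let T(y) = Σ_{k=0}^p (1/k!) D^kV(x)[y − x]^k be the Taylor polynomial of V at x. Let δ > 0, M > 0, and let σ̂, τ : [0, ∞) → [0, ∞) be nondecreasing functions such that: (a) ‖DV(y) − DT(y)‖_op ≤ τ(‖y − x‖) for all y ∈ Q; (b) r·τ(r) ≤ (p + 1)·σ̂(r) for all r ≥ 0; (c) τ(r) ≤ τ(s) + (τ(s)/s^p)·r^p for all r ≥ 0 and s > 0; (d) σ̂( (2δ/(5M))^{1/(p+1)} ) ≤ 2δ / (5(p + 1)). Set α = M^{1/(p+1)} (2δ/5)^{p/(p+1)}. Then the operator Φ(y) = T(y) + (α + M‖y − x‖^p)·(y − x) is monotone on Q: ⟨Φ(y) − Φ(z), y − z⟩ ≥ 0 for all y, z ∈ Q. -/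
open scoped RealInnerProductSpace

/-- psd of derivative of a monotone operator at an interior point. -/
lemma aux_monotone_psd {E : Type*} [NormedAddCommGroup E] [InnerProductSpace ℝ E]
    {Q : Set E} (hQo : IsOpen Q) {V : E → E} {D : E →L[ℝ] E} {w : E} (hw : w ∈ Q)
    (hD : HasFDerivAt V D w)
    (hmono : ∀ y ∈ Q, ∀ z ∈ Q, 0 ≤ ⟪V y - V z, y - z⟫) (h : E) :
    0 ≤ ⟪D h, h⟫ := by
  set c : ℝ → E := fun t => w + t • h with hc
  have hcd : HasDerivAt c h 0 := by
    have : HasDerivAt (fun t : ℝ => t • h) ((1:ℝ) • h) 0 := (hasDerivAt_id 0).smul_const h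
    simpa [hc] using this.const_add w
  have hgd : HasDerivAt (fun t => V (c t)) (D h) 0 := by
    refine HasFDerivAt.comp_hasDerivAt 0 ?_ hcd
    simpa [hc] using hD
  have hslope : Filter.Tendsto (slope (fun t => V (c t)) 0) (nhdsWithin 0 {(0:ℝ)}ᶜ) (nhds (D h)) :=
    hasDerivAt_iff_tendsto_slope.mp hgd
  have hmono' : Filter.Tendsto (slope (fun t => V (c t)) 0) (nhdsWithin 0 (Set.Ioi 0)) (nhds (D h)) :=
    hslope.mono_left (nhdsWithin_mono 0 (fun t ht => ne_of_gt ht))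
  have htend : Filter.Tendsto (fun t => ⟪slope (fun s => V (c s)) 0 t, h⟫)
      (nhdsWithin 0 (Set.Ioi 0)) (nhds ⟪D h, h⟫) :=
    hmono'.inner tendsto_const_nhds
  refine ge_of_tendsto htend ?_
  have hcont : Continuous c := by continuity
  have hQev : ∀ᶠ t in nhds (0:ℝ), c t ∈ Q := by
    have : c 0 ∈ Q := by simpa [hc] using hw
    exact (hcont.continuousAt).eventually_mem (hQo.mem_nhds this)
  refine ((hQev.filter_mono nhdsWithin_le_nhds).and eventually_mem_nhdsWithin).mono ?_
  rintro t ⟨htQ, ht0⟩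
  · have ht0' : (0:ℝ) < t := ht0
    have hm := hmono (c t) htQ (c 0) (by simpa [hc] using hw)
    have hdiff : c t - c 0 = t • h := by simp [hc]
    rw [hdiff] at hm
    have : slope (fun s => V (c s)) 0 t = t⁻¹ • (V (c t) - V (c 0)) := by
      simp [slope_def_module]
    rw [this]
    rw [real_inner_smul_left]
    have : (0:ℝ) ≤ ⟪V (c t) - V (c 0), h⟫ := by
      have := hm
      rw [real_inner_smul_right] at this
      nlinarith
    positivity


lemma aux_key (p : ℕ) (hp : 2 ≤ p) (δ M : ℝ) (hδ : 0 < δ) (hM : 0 < M)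
    (σ τ : ℝ → ℝ)
    (hb : ∀ r : ℝ, 0 ≤ r → r * τ r ≤ ((p : ℝ) + 1) * σ r)
    (hcc : ∀ r : ℝ, 0 ≤ r → ∀ s : ℝ, 0 < s → τ r ≤ τ s + (τ s / s ^ p) * r ^ p)
    (hd : σ ((2 * δ / (5 * M)) ^ ((1 : ℝ) / ((p : ℝ) + 1))) ≤ 2 * δ / (5 * ((p : ℝ) + 1)))
    (α : ℝ) (hα : α = M ^ ((1 : ℝ) / ((p : ℝ) + 1)) * (2 * δ / 5) ^ ((p : ℝ) / ((p : ℝ) + 1))) :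
    ∀ r : ℝ, 0 ≤ r → τ r ≤ α + M * r ^ p := by
  have hb0 : (0:ℝ) < 2 * δ / (5 * M) := by positivity
  set s : ℝ := (2 * δ / (5 * M)) ^ ((1 : ℝ) / ((p : ℝ) + 1)) with hs_def
  have hs : 0 < s := Real.rpow_pos_of_pos hb0 _
  have hp1 : ((p:ℝ) + 1) ≠ 0 := by positivity
  have hspow : s ^ (p + 1) = 2 * δ / (5 * M) := by
    rw [hs_def, ← Real.rpow_natCast (_ ^ _) (p+1), ← Real.rpow_mul hb0.le]
    have he : (1:ℝ) / ((p:ℝ)+1) * (((p:ℕ)+1 : ℕ) : ℝ) = 1 := by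
      push_cast; field_simp
    rw [he, Real.rpow_one]
  have hsp_eq : M * s ^ p = α := by
    have h1 : (s:ℝ) ^ p = (2 * δ / (5 * M)) ^ ((p:ℝ) / ((p:ℝ) + 1)) := by
      rw [hs_def, ← Real.rpow_natCast (_ ^ _) p, ← Real.rpow_mul hb0.le,
        show (1:ℝ)/((p:ℝ)+1) * ((p:ℕ):ℝ) = (p:ℝ)/((p:ℝ)+1) from by ring]
    have h2 : (2 * δ / (5 * M)) = (2 * δ / 5) / M := by ring
    have h3 : ((2 * δ / 5) / M) ^ ((p:ℝ) / ((p:ℝ) + 1))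
        = (2 * δ / 5) ^ ((p:ℝ) / ((p:ℝ) + 1)) / M ^ ((p:ℝ) / ((p:ℝ) + 1)) := by
      rw [Real.div_rpow (by positivity) hM.le]
    have h4 : M ^ ((1:ℝ)/((p:ℝ)+1)) * M ^ ((p:ℝ)/((p:ℝ)+1)) = M := by
      rw [← Real.rpow_add hM]
      rw [show (1:ℝ)/((p:ℝ)+1) + (p:ℝ)/((p:ℝ)+1) = 1 by field_simp; ring]
      exact Real.rpow_one M
    have hMq : (0:ℝ) < M ^ ((p:ℝ)/((p:ℝ)+1)) := Real.rpow_pos_of_pos hM _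
    rw [h1, h2, h3, hα]
    field_simp
    linear_combination (-1 : ℝ) * h4
  -- bound τ s ≤ M * s ^ p
  have hτs : τ s ≤ M * s ^ p := by
    have h1 := hb s hs.le
    have h2 : ((p:ℝ)+1) * σ s ≤ 2 * δ / 5 := by
      calc ((p:ℝ)+1) * σ s ≤ ((p:ℝ)+1) * (2 * δ / (5 * ((p:ℝ)+1))) := by
            apply mul_le_mul_of_nonneg_left hd (by positivity)
        _ = 2 * δ / 5 := by field_simp
    have h3 : s * τ s ≤ 2 * δ / 5 := le_trans h1 h2
    have h4 : M * s ^ (p+1) = 2 * δ / 5 := by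
      rw [hspow]; field_simp
    have : s * τ s ≤ s * (M * s ^ p) := by
      rw [show s * (M * s ^ p) = M * s ^ (p+1) by ring, h4]; exact h3
    exact le_of_mul_le_mul_left this hs
  intro r hr
  have h5 := hcc r hr s hs
  have h6 : τ s / s ^ p ≤ M := by
    rw [div_le_iff₀ (by positivity)]
    linarith [hτs]
  have h7 : (τ s / s ^ p) * r ^ p ≤ M * r ^ p :=
    mul_le_mul_of_nonneg_right h6 (by positivity)
  have h8 : τ s ≤ α := by rw [← hsp_eq]; exact hτs
  linarith

lemma aux_norm_pow {E : Type*} [NormedAddCommGroup E] (p : ℕ) (u : E) :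
    ((‖u‖:ℝ) ^ 2) ^ ((p:ℝ)/2) = ‖u‖ ^ p := by
  rw [← Real.rpow_natCast ‖u‖ 2, ← Real.rpow_mul (norm_nonneg u),
    show ((2:ℕ):ℝ) * ((p:ℝ)/2) = (p:ℝ) from by push_cast; ring, Real.rpow_natCast]


/-- Monotonicity of the doubly regularized subproblem operator:
if `V` is a `C^p` monotone operator on an open convex set `Q ∋ x`, `T` is its `p`-th
order Taylor polynomial at `x`, the remainder bounds (a)–(c) and the largeness
condition (d) on `M` hold, and `α = M^{1/(p+1)}(2δ/5)^{p/(p+1)}`, then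
`Φ(y) = T(y) + (α + M‖y − x‖^p)(y − x)` is monotone on `Q`. -/
theorem doubly_regularized_subproblem_monotone
    {E : Type*} [NormedAddCommGroup E] [InnerProductSpace ℝ E] [FiniteDimensional ℝ E]
    (Q : Set E) (hQo : IsOpen Q) (hQc : Convex ℝ Q)
    (p : ℕ) (hp : 2 ≤ p) (V : E → E) (hV : ContDiffOn ℝ p V Q)
    (hmono : ∀ y ∈ Q, ∀ z ∈ Q, 0 ≤ ⟪V y - V z, y - z⟫)
    (x : E) (hx : x ∈ Q)
    (T : E → E)
    (hT : T = fun z => ∑ k ∈ Finset.range (p + 1),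
      ((Nat.factorial k : ℝ))⁻¹ • iteratedFDerivWithin ℝ k V Q x (fun _ => z - x))
    (δ M : ℝ) (hδ : 0 < δ) (hM : 0 < M)
    (σ τ : ℝ → ℝ)
    (hσ_mono : MonotoneOn σ (Set.Ici (0 : ℝ))) (hτ_mono : MonotoneOn τ (Set.Ici (0 : ℝ)))
    (hσ_nonneg : ∀ r, 0 ≤ r → 0 ≤ σ r) (hτ_nonneg : ∀ r, 0 ≤ r → 0 ≤ τ r)
    (ha : ∀ y ∈ Q, ‖fderivWithin ℝ V Q y - fderiv ℝ T y‖ ≤ τ ‖y - x‖)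
    (hb : ∀ r : ℝ, 0 ≤ r → r * τ r ≤ ((p : ℝ) + 1) * σ r)
    (hcc : ∀ r : ℝ, 0 ≤ r → ∀ s : ℝ, 0 < s → τ r ≤ τ s + (τ s / s ^ p) * r ^ p)
    (hd : σ ((2 * δ / (5 * M)) ^ ((1 : ℝ) / ((p : ℝ) + 1))) ≤ 2 * δ / (5 * ((p : ℝ) + 1)))
    (α : ℝ) (hα : α = M ^ ((1 : ℝ) / ((p : ℝ) + 1)) * (2 * δ / 5) ^ ((p : ℝ) / ((p : ℝ) + 1)))
    (Φ : E → E) (hΦ : Φ = fun y => T y + (α + M * ‖y - x‖ ^ p) • (y - x)) :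
    ∀ y ∈ Q, ∀ z ∈ Q, 0 ≤ ⟪Φ y - Φ z, y - z⟫ := by
  -- the key scalar inequality
  have key : ∀ r : ℝ, 0 ≤ r → τ r ≤ α + M * r ^ p :=
    aux_key p hp δ M hδ hM σ τ hb hcc hd α hα
  have hαpos : 0 ≤ α := by rw [hα]; positivity
  -- differentiability of T
  have hTdiff : Differentiable ℝ T := by
    rw [hT]
    apply Differentiable.fun_sum
    intro k _
    apply Differentiable.const_smul
    exact ((iteratedFDerivWithin ℝ k V Q x).contDiff (n := 1)).comp
      (contDiff_pi.mpr fun _ => contDiff_id.sub contDiff_const) |>.differentiable one_ne_zero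
  -- differentiability of V on Q
  have hVdiff : DifferentiableOn ℝ V Q := hV.differentiableOn (by exact_mod_cast by omega)
  intro y hy z hz
  set h : E := y - z with hh
  set c : ℝ → E := fun t => z + t • h with hc
  have hcmem : ∀ t ∈ Set.Icc (0:ℝ) 1, c t ∈ Q := by
    intro t ht
    exact hQc.add_smul_sub_mem hz hy ht
  set q : ℝ := (p:ℝ)/2 with hq
  have hq1 : (1:ℝ) ≤ q := by
    rw [hq]; rw [le_div_iff₀ (by norm_num : (0:ℝ) < 2)]
    exact_mod_cast by exact_mod_cast hp
  set φ : ℝ → ℝ := fun t => ⟪T (c t), h⟫ + (α + M * ((‖c t - x‖:ℝ)^2) ^ q) * ⟪c t - x, h⟫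
    with hφ
  -- derivative of φ
  set φ' : ℝ → ℝ := fun t => (⟪fderiv ℝ T (c t) h, h⟫ +
      ((M * (q * ((‖c t - x‖:ℝ)^2) ^ (q - 1) * (2 * ⟪c t - x, h⟫))) * ⟪c t - x, h⟫ +
        (α + M * ((‖c t - x‖:ℝ)^2) ^ q) * ⟪h, h⟫)) with hφ'
  have hderiv : ∀ t : ℝ, HasDerivAt φ (φ' t) t := by
    intro t
    have hcd : HasDerivAt c h t := by
      have : HasDerivAt (fun s : ℝ => s • h) ((1:ℝ) • h) t := (hasDerivAt_id t).smul_const h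
      simpa [hc] using this.const_add z
    have hcx : HasDerivAt (fun s => c s - x) h t := hcd.sub_const x
    have hB : HasDerivAt (fun s => ⟪c s - x, h⟫) ⟪h, h⟫ t := by
      have := hcx.inner ℝ (hasDerivAt_const t h)
      simpa using this
    have hn : HasDerivAt (fun s => ((‖c s - x‖:ℝ)^2)) (2 * ⟪c t - x, h⟫) t := by
      have h1 : HasDerivAt (fun s => ⟪c s - x, c s - x⟫) (⟪c t - x, h⟫ + ⟪h, c t - x⟫) t :=
        hcx.inner ℝ hcx
      have h2 : (fun s => ⟪c s - x, c s - x⟫) = fun s => ((‖c s - x‖:ℝ)^2) := by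
        funext s; exact real_inner_self_eq_norm_sq _
      rw [h2] at h1
      convert h1 using 1
      rw [real_inner_comm (c t - x) h]; ring
    have hr : HasDerivAt (fun s => ((‖c s - x‖:ℝ)^2) ^ q)
        (q * ((‖c t - x‖:ℝ)^2) ^ (q - 1) * (2 * ⟪c t - x, h⟫)) t := by
      have := (Real.hasDerivAt_rpow_const (x := (‖c t - x‖:ℝ)^2) (p := q)
        (Or.inr hq1)).comp t hn
      simpa [Function.comp_def] using this
    have hA : HasDerivAt (fun s => ⟪T (c s), h⟫) ⟪fderiv ℝ T (c t) h, h⟫ t := by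
      have hTc : HasDerivAt (fun s => T (c s)) (fderiv ℝ T (c t) h) t :=
        (hTdiff (c t)).hasFDerivAt.comp_hasDerivAt t hcd
      have := hTc.inner ℝ (hasDerivAt_const t h)
      simpa using this
    have hreg : HasDerivAt (fun s => (α + M * ((‖c s - x‖:ℝ)^2) ^ q) * ⟪c s - x, h⟫)
        ((M * (q * ((‖c t - x‖:ℝ)^2) ^ (q - 1) * (2 * ⟪c t - x, h⟫))) * ⟪c t - x, h⟫ +
          (α + M * ((‖c t - x‖:ℝ)^2) ^ q) * ⟪h, h⟫) t := by
      have h1 : HasDerivAt (fun s => α + M * ((‖c s - x‖:ℝ)^2) ^ q)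
          (M * (q * ((‖c t - x‖:ℝ)^2) ^ (q - 1) * (2 * ⟪c t - x, h⟫))) t :=
        ((hr.const_mul M).const_add α)
      exact h1.mul hB
    exact hA.add hreg
  -- nonnegativity of φ' on Q points
  have hnonneg : ∀ t ∈ Set.Icc (0:ℝ) 1, 0 ≤ φ' t := by
    intro t ht
    have hwQ : c t ∈ Q := hcmem t ht
    set w : E := c t with hw
    set u : E := w - x with hu
    have hDV : HasFDerivAt V (fderivWithin ℝ V Q w) w :=
      ((hVdiff w hwQ).hasFDerivWithinAt).hasFDerivAt (hQo.mem_nhds hwQ)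
    have hpsd : 0 ≤ ⟪fderivWithin ℝ V Q w h, h⟫ := aux_monotone_psd hQo hwQ hDV hmono h
    have hbound : ‖fderivWithin ℝ V Q w - fderiv ℝ T w‖ ≤ τ ‖u‖ := ha w hwQ
    have hkey : τ ‖u‖ ≤ α + M * ‖u‖ ^ p := key _ (norm_nonneg u)
    -- inner product bound
    have hib : |⟪fderivWithin ℝ V Q w h - fderiv ℝ T w h, h⟫| ≤ τ ‖u‖ * ‖h‖ ^ 2 := by
      calc |⟪fderivWithin ℝ V Q w h - fderiv ℝ T w h, h⟫|
          ≤ ‖fderivWithin ℝ V Q w h - fderiv ℝ T w h‖ * ‖h‖ := abs_real_inner_le_norm _ _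
        _ = ‖(fderivWithin ℝ V Q w - fderiv ℝ T w) h‖ * ‖h‖ := by
            rw [ContinuousLinearMap.sub_apply]
        _ ≤ (‖fderivWithin ℝ V Q w - fderiv ℝ T w‖ * ‖h‖) * ‖h‖ := by
            apply mul_le_mul_of_nonneg_right (ContinuousLinearMap.le_opNorm _ _) (norm_nonneg h)
        _ ≤ (τ ‖u‖ * ‖h‖) * ‖h‖ := by
            apply mul_le_mul_of_nonneg_right
              (mul_le_mul_of_nonneg_right hbound (norm_nonneg h)) (norm_nonneg h)
        _ = τ ‖u‖ * ‖h‖ ^ 2 := by ring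
    have hT_lb : -(τ ‖u‖ * ‖h‖^2) + ⟪fderivWithin ℝ V Q w h, h⟫ ≤ ⟪fderiv ℝ T w h, h⟫ := by
      have h2 := (abs_le.mp hib).2
      have hsplit : ⟪fderivWithin ℝ V Q w h - fderiv ℝ T w h, h⟫
          = ⟪fderivWithin ℝ V Q w h, h⟫ - ⟪fderiv ℝ T w h, h⟫ := inner_sub_left _ _ _
      rw [hsplit] at h2
      linarith
    have hupow : ((‖u‖:ℝ)^2) ^ q = ‖u‖ ^ p := aux_norm_pow p u
    have hmid : 0 ≤ (M * (q * ((‖u‖:ℝ)^2) ^ (q - 1) * (2 * ⟪u, h⟫))) * ⟪u, h⟫ := by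
      have h1 : (0:ℝ) ≤ ((‖u‖:ℝ)^2) ^ (q - 1) := Real.rpow_nonneg (by positivity) _
      have h2 : (M * (q * ((‖u‖:ℝ)^2) ^ (q - 1) * (2 * ⟪u, h⟫))) * ⟪u, h⟫
          = 2 * M * q * ((‖u‖:ℝ)^2) ^ (q - 1) * ⟪u, h⟫^2 := by ring
      rw [h2]
      have hq0 : (0:ℝ) ≤ q := le_trans zero_le_one hq1
      positivity
    have hinner_hh : ⟪h, h⟫ = ‖h‖^2 := real_inner_self_eq_norm_sq h
    rw [hφ']
    simp only [← hw, ← hu]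
    rw [hupow, hinner_hh]
    nlinarith [sq_nonneg ‖h‖, mul_le_mul_of_nonneg_right hkey (sq_nonneg ‖h‖)]
  -- monotonicity of φ on [0,1]
  have hmonoφ : MonotoneOn φ (Set.Icc (0:ℝ) 1) := by
    apply monotoneOn_of_hasDerivWithinAt_nonneg (convex_Icc 0 1)
      (f' := φ')
    · exact fun t _ => (hderiv t).continuousAt.continuousWithinAt
    · intro t htint
      exact (hderiv t).hasDerivWithinAt
    · intro t htint
      rw [interior_Icc] at htint
      exact hnonneg t ⟨le_of_lt htint.1, le_of_lt htint.2⟩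
  have h01 : φ 0 ≤ φ 1 := hmonoφ (Set.mem_Icc.mpr ⟨le_refl 0, zero_le_one⟩)
    (Set.mem_Icc.mpr ⟨zero_le_one, le_refl 1⟩) zero_le_one
  -- identify φ 1 - φ 0 with the inner product
  have hc1 : c 1 = y := by rw [hc]; simp [hh]
  have hc0 : c 0 = z := by rw [hc]; simp
  have hφ1 : φ 1 = ⟪Φ y, h⟫ := by
    simp only [hφ, hΦ, hc1, hq]
    rw [aux_norm_pow p (y - x)]
    simp [inner_add_left, real_inner_smul_left]
  have hφ0 : φ 0 = ⟪Φ z, h⟫ := by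
    simp only [hφ, hΦ, hc0, hq]
    rw [aux_norm_pow p (z - x)]
    simp [inner_add_left, real_inner_smul_left]
  have : ⟪Φ y - Φ z, h⟫ = φ 1 - φ 0 := by rw [hφ1, hφ0, inner_sub_left]
  rw [hh] at this
  rw [this]
  linarith
end
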